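/- arXiv:2404.15253 — 4 statements merged into one kernel-verified Lean document; each statement's English description precedes it below -/
import Mathlib

section
/- Let (S, F, λ) be a measure space, ν a probability measure with strictly positive density γ with respect to λ, and F : S → S a measurable involution that preserves λ. Define a Markov transition from Z by: draw U ~ uniform([0,1]); set Z' = F(Z) if U ≤ min(1, γ(F(Z))/γ(Z)) and Z' = Z otherwise. Then this transition kernel is reversible with respect to ν, i.e., for all measurable sets A, B, P(Z ∈ A, Z' ∈ B) = P(Z ∈ B, Z' ∈ A) when Z ~ ν. -/
/-!
From `x` the chain moves to `F x` with flux `γ x * min 1 (γ (F x) / γ x) = min (γ x) (γ (F x))`,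
which is invariant under the involution `F`. Since `F` preserves `λ`, the moving part
`∫_{A ∩ F⁻¹ B} min (γ x) (γ (F x)) dλ` of `P(Z ∈ A, Z' ∈ B)` is therefore symmetric in `A` and `B`,
and so, trivially, is the staying part `∫_{A ∩ B} (1 - β) dν`.
-/

open MeasureTheory ENNReal

theorem ENNReal.mul_min_one_div {a : ℝ≥0∞} (ha : a ≠ ∞) (b : ℝ≥0∞) :
    a * min 1 (b / a) = min a b := by
  rcases eq_or_ne a 0 with rfl | ha₀
  · simp
  · rw [mul_min, mul_one, ENNReal.mul_div_cancel ha₀ ha]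

section

variable {S : Type*} [MeasurableSpace S]

theorem ae_lt_top_of_withDensity {lam : Measure S} {γ : S → ℝ≥0∞}
    [IsFiniteMeasure (lam.withDensity γ)] (hγ : Measurable γ) : ∀ᵐ x ∂lam, γ x < ∞ :=
  ae_lt_top hγ (by simpa [withDensity_apply] using measure_ne_top (lam.withDensity γ) Set.univ)

theorem setLIntegral_move_or_stay_eq (μ : Measure S) {β : S → ℝ≥0∞} (hβ : Measurable β)
    {F : S → S} (hF : Measurable F) (A : Set S) {B : Set S} (hB : MeasurableSet B) :
    ∫⁻ x in A, (β x * B.indicator 1 (F x) + (1 - β x) * B.indicator 1 x) ∂μ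
      = ∫⁻ x in F ⁻¹' B ∩ A, β x ∂μ + ∫⁻ x in B ∩ A, (1 - β x) ∂μ := by
  have hmove : ∀ x, β x * B.indicator 1 (F x) = (F ⁻¹' B).indicator β x := fun x => by
    by_cases hx : F x ∈ B <;> simp [hx]
  have hstay : ∀ x, (1 - β x) * B.indicator 1 x = B.indicator (fun x => 1 - β x) x := fun x => by
    by_cases hx : x ∈ B <;> simp [hx]
  simp only [hmove, hstay]
  rw [lintegral_add_left (hβ.indicator (hB.preimage hF)),
    setLIntegral_indicator (hB.preimage hF), setLIntegral_indicator hB]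

theorem setLIntegral_preimage_inter_comm {lam : Measure S} {F : S → S}
    (hF : MeasurePreserving F lam lam) (hFinv : Function.Involutive F)
    {g : S → ℝ≥0∞} (hg : Measurable g) (hgF : g ∘ F =ᵐ[lam] g)
    {A B : Set S} (hA : MeasurableSet A) (hB : MeasurableSet B) :
    ∫⁻ x in F ⁻¹' B ∩ A, g x ∂lam = ∫⁻ x in F ⁻¹' A ∩ B, g x ∂lam := by
  have hpre : F ⁻¹' (F ⁻¹' A ∩ B) = F ⁻¹' B ∩ A := by
    rw [Set.preimage_inter, ← Set.preimage_comp, hFinv.comp_self, Set.preimage_id,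
      Set.inter_comm]
  rw [← hF.setLIntegral_comp_preimage ((hA.preimage hF.measurable).inter hB) hg, hpre]
  exact setLIntegral_congr_fun_ae ((hB.preimage hF.measurable).inter hA)
    (hgF.mono fun _ hx _ => hx.symm)

end

theorem stmt_0_general {S : Type*} [MeasurableSpace S] (lam : Measure S)
    (γ : S → ℝ≥0∞) (hγm : Measurable γ)
    (ν : Measure S) [IsProbabilityMeasure ν] (hν : ν = lam.withDensity γ)
    (F : S → S) (hFinv : ∀ x, F (F x) = x)
    (hFpres : MeasurePreserving F lam lam)
    (A B : Set S) (hA : MeasurableSet A) (hB : MeasurableSet B) :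
    ∫⁻ x in A, (min 1 (γ (F x) / γ x) * B.indicator (1 : S → ℝ≥0∞) (F x)
        + (1 - min 1 (γ (F x) / γ x)) * B.indicator (1 : S → ℝ≥0∞) x) ∂ν
      = ∫⁻ x in B, (min 1 (γ (F x) / γ x) * A.indicator (1 : S → ℝ≥0∞) (F x)
        + (1 - min 1 (γ (F x) / γ x)) * A.indicator (1 : S → ℝ≥0∞) x) ∂ν := by
  subst hν
  have hFm := hFpres.measurable
  have hβ : Measurable fun x => min 1 (γ (F x) / γ x) :=
    measurable_const.min ((hγm.comp hFm).div hγm)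
  rw [setLIntegral_move_or_stay_eq _ hβ hFm A hB, setLIntegral_move_or_stay_eq _ hβ hFm B hA,
    Set.inter_comm A B]
  congr 1
  -- `γ x * min 1 (γ (F x) / γ x) = min (γ x) (γ (F x))` fails where `γ x = ∞`, hence only a.e.
  have hflux : (fun x => γ x * min 1 (γ (F x) / γ x)) =ᵐ[lam] fun x => min (γ x) (γ (F x)) :=
    (ae_lt_top_of_withDensity hγm).mono fun x hx => ENNReal.mul_min_one_div hx.ne _
  have hflux_comp : (fun x => γ x * min 1 (γ (F x) / γ x)) ∘ F
      =ᵐ[lam] fun x => γ x * min 1 (γ (F x) / γ x) :=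
    (hFpres.quasiMeasurePreserving.ae_eq_comp hflux).trans <|
      (Filter.EventuallyEq.of_eq (funext fun x => by simp [hFinv, min_comm])).trans hflux.symm
  rw [setLIntegral_withDensity_eq_setLIntegral_mul _ hγm hβ ((hB.preimage hFm).inter hA),
    setLIntegral_withDensity_eq_setLIntegral_mul _ hγm hβ ((hA.preimage hFm).inter hB)]
  exact setLIntegral_preimage_inter_comm hFpres hFinv (hγm.mul hβ) hflux_comp hA hB

/-- Metropolis step with deterministic involutive proposal `F` is reversible
with respect to `ν = γ·λ`:  for all measurable `A B`,
`P(Z ∈ A, Z' ∈ B) = P(Z ∈ B, Z' ∈ A)` where from `Z = x` the chain moves to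
`F x` with probability `min 1 (γ (F x) / γ x)` and stays at `x` otherwise. -/
theorem stmt_0 {S : Type*} [MeasurableSpace S] (lam : Measure S)
    (γ : S → ℝ≥0∞) (hγm : Measurable γ) (hγpos : ∀ x, 0 < γ x)
    (ν : Measure S) [IsProbabilityMeasure ν] (hν : ν = lam.withDensity γ)
    (F : S → S) (hFm : Measurable F) (hFinv : ∀ x, F (F x) = x)
    (hFpres : MeasurePreserving F lam lam)
    (A B : Set S) (hA : MeasurableSet A) (hB : MeasurableSet B) :
    ∫⁻ x in A, (min 1 (γ (F x) / γ x) * B.indicator (1 : S → ℝ≥0∞) (F x)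
        + (1 - min 1 (γ (F x) / γ x)) * B.indicator (1 : S → ℝ≥0∞) x) ∂ν
      = ∫⁻ x in B, (min 1 (γ (F x) / γ x) * A.indicator (1 : S → ℝ≥0∞) (F x)
        + (1 - min 1 (γ (F x) / γ x)) * A.indicator (1 : S → ℝ≥0∞) x) ∂ν :=
  stmt_0_general lam γ hγm ν hν F hFinv hFpres A B hA hB
end

section
/- Let Q(i | θ, ρ, J) ∝ e^{−H(Φ^i(θ,ρ))} for i ∈ J (Boltzmann index selection), where Φ satisfies S ∘ Φ ∘ S = Φ^{−1} and H ∘ S = H. Then the detailed balance condition e^{−H(Φ^i(θ₀,ρ₀))} Q(i | S ∘ Φ^i(θ₀,ρ₀), −(J−i)) = e^{−H(θ₀,ρ₀)} Q(i | θ₀, ρ₀, J) holds for all i ∈ J. -/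
open MeasureTheory ENNReal

noncomputable section

/-- Phase space `ℝ^d × ℝ^d` (positions and momenta). -/
abbrev Phase (d : ℕ) : Type := (Fin d → ℝ) × (Fin d → ℝ)

/-- The momentum flip map `S(θ, ρ) = (θ, -ρ)`. -/
def Smap (d : ℕ) : Phase d → Phase d := fun z => (z.1, -z.2)

lemma Smap_involutive (d : ℕ) : Function.Involutive (Smap d) := by
  intro z; simp [Smap]

/-- `S` as a permutation. -/
def Sperm (d : ℕ) : Equiv.Perm (Phase d) := (Smap_involutive d).toPerm

lemma key {d : ℕ} (Φ : Equiv.Perm (Phase d))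
    (hΦS : ∀ z, Smap d (Φ (Smap d z)) = Φ⁻¹ z) (k : ℤ) (z : Phase d) :
    (Φ ^ k) (Smap d z) = Smap d ((Φ ^ (-k)) z) := by
  have hSinv : (Sperm d)⁻¹ = Sperm d := rfl
  have hScoe : ∀ u, Sperm d u = Smap d u := fun _ => rfl
  have hconj : Sperm d * Φ * (Sperm d)⁻¹ = Φ⁻¹ := by
    apply Equiv.ext; intro w
    rw [hSinv, Equiv.Perm.mul_apply, Equiv.Perm.mul_apply, hScoe, hScoe]
    exact hΦS w
  have h2 : Sperm d * Φ ^ k * (Sperm d)⁻¹ = Φ ^ (-k) := by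
    have := map_zpow (MulAut.conj (Sperm d)) Φ k
    simp only [MulAut.conj_apply] at this
    rw [this, hconj, ← zpow_neg_one, ← zpow_mul]
    ring_nf
  have h3 : ∀ w, Smap d ((Φ ^ k) w) = (Φ ^ (-k)) (Smap d w) := by
    intro w
    have := congrArg (fun (g : Equiv.Perm (Phase d)) => g (Smap d w)) h2
    simp only [Equiv.Perm.mul_apply, hSinv, hScoe] at this
    rwa [Smap_involutive d w] at this
  have h4 := h3 (Smap d z)
  rw [Smap_involutive d z] at h4
  rw [← (Smap_involutive d) ((Φ ^ k) (Smap d z)), h4]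

/-- Boltzmann index selection `Q(i | z, J) ∝ e^{-H(Φ^i z)}` satisfies the detailed
balance condition
`e^{-H(Φ^i z)} Q(i | S∘Φ^i z, -(J-i)) = e^{-H(z)} Q(i | z, J)` for `i ∈ J`. -/
theorem stmt_16 {d : ℕ} (Φ : Equiv.Perm (Phase d))
    (hΦS : ∀ z, Smap d (Φ (Smap d z)) = Φ⁻¹ z)
    (H : Phase d → ℝ) (hHS : ∀ z, H (Smap d z) = H z)
    (Q : ℤ → Phase d → Finset ℤ → ℝ)
    (hQ : ∀ (i : ℤ) (z : Phase d) (J : Finset ℤ),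
      Q i z J = Real.exp (-(H ((Φ ^ i) z))) / ∑ j ∈ J, Real.exp (-(H ((Φ ^ j) z))))
    (z : Phase d) (J : Finset ℤ) (i : ℤ) (hi : i ∈ J) :
    Real.exp (-(H ((Φ ^ i) z)))
        * Q i (Smap d ((Φ ^ i) z)) ((J.image (fun j => j - i)).image Neg.neg)
      = Real.exp (-(H z)) * Q i z J := by
  rw [hQ, hQ]
  set w := Smap d ((Φ ^ i) z) with hw
  -- numerator: Φ^i w = S z
  have hnum : H ((Φ ^ i) w) = H z := by
    rw [hw, key Φ hΦS i, hHS, ← Equiv.Perm.mul_apply, ← zpow_add]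
    simp
  -- each term of the new sum
  have hterm : ∀ k : ℤ, H ((Φ ^ (-(k - i))) w) = H ((Φ ^ k) z) := by
    intro k
    rw [hw, key Φ hΦS (-(k - i)), hHS, neg_neg, ← Equiv.Perm.mul_apply, ← zpow_add]
    ring_nf
  have hsum : (∑ j ∈ (J.image (fun j => j - i)).image Neg.neg,
      Real.exp (-(H ((Φ ^ j) w)))) = ∑ j ∈ J, Real.exp (-(H ((Φ ^ j) z))) := by
    rw [Finset.sum_image (by intro a _ b _ h; exact neg_injective h),
        Finset.sum_image (by intro a _ b _ h; exact sub_left_injective h)]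
    exact Finset.sum_congr rfl fun k _ => by rw [hterm k]
  rw [hnum, hsum]
  ring
end
end

section
/- Combining the NUTS detailed balance condition for the index selection kernel with the orbit symmetry condition P(−(J−i) | S ∘ Φ^i(θ₀,ρ₀)) = P(J | θ₀,ρ₀), the GIST acceptance ratio e^{−ΔH(θ₀,ρ₀)} · [P(−(J−i) | z*) Q(i | z*, −(J−i))] / [P(J | θ₀,ρ₀) Q(i | θ₀,ρ₀, J)] with z* = S ∘ Φ^i(θ₀, ρ₀) and ΔH = H(Φ^i(θ₀,ρ₀)) − H(θ₀,ρ₀) equals 1; hence the Metropolis-within-Gibbs step in NUTS always accepts. -/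
open MeasureTheory ENNReal

noncomputable section

/-- Combining the orbit symmetry condition `P(-(J-i) | S∘Φ^i z) = P(J | z)` with the
index-kernel detailed balance condition, the GIST acceptance ratio for NUTS equals 1:
the Metropolis-within-Gibbs step always accepts. -/
theorem stmt_17 {d : ℕ} (Φ : Equiv.Perm (Phase d))
    (hΦS : ∀ z, Smap d (Φ (Smap d z)) = Φ⁻¹ z)
    (H : Phase d → ℝ) (hHS : ∀ z, H (Smap d z) = H z)
    (P : Finset ℤ → Phase d → ℝ) (Q : ℤ → Phase d → Finset ℤ → ℝ)
    (z : Phase d) (J : Finset ℤ) (i : ℤ) (hi : i ∈ J)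
    (hP : P ((J.image (fun j => j - i)).image Neg.neg) (Smap d ((Φ ^ i) z)) = P J z)
    (hQ : Real.exp (-(H ((Φ ^ i) z)))
        * Q i (Smap d ((Φ ^ i) z)) ((J.image (fun j => j - i)).image Neg.neg)
      = Real.exp (-(H z)) * Q i z J)
    (hPpos : 0 < P J z) (hQpos : 0 < Q i z J) :
    Real.exp (-(H ((Φ ^ i) z) - H z))
        * (P ((J.image (fun j => j - i)).image Neg.neg) (Smap d ((Φ ^ i) z))
          * Q i (Smap d ((Φ ^ i) z)) ((J.image (fun j => j - i)).image Neg.neg))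
        / (P J z * Q i z J) = 1 := by
  rw [hP]
  have hE : Real.exp (-(H ((Φ ^ i) z) - H z))
      = Real.exp (-(H ((Φ ^ i) z))) / Real.exp (-(H z)) := by
    rw [← Real.exp_sub]; ring_nf
  have hq : Q i (Smap d ((Φ ^ i) z)) ((J.image (fun j => j - i)).image Neg.neg)
      = Real.exp (-(H z)) * Q i z J / Real.exp (-(H ((Φ ^ i) z))) := by
    field_simp at hQ ⊢
    linarith [hQ]
  rw [hq, hE]
  have e1 := (Real.exp_pos (-(H ((Φ ^ i) z)))).ne'
  have e2 := (Real.exp_pos (-(H z))).ne'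
  field_simp
end
end

section
/- For the Apogee-to-Apogee Path Sampler, the map G(θ, ρ, c, i) = (S ∘ Φ_h^i(θ, ρ), c + S_#((θ,ρ), S ∘ Φ_h^i(θ,ρ)), i) is an involution on ℝ^{2d} × ℤ² provided the segment-index function satisfies S_#((θ,ρ), (θ',ρ')) = −S_#((θ',ρ'), (θ,ρ)) whenever (θ',ρ') is accessible from (θ,ρ), and S ∘ Φ_h^i is an involution in the phase-space component in the sense that S ∘ Φ_h^i(S ∘ Φ_h^i(θ,ρ)) = (θ,ρ). -/
open MeasureTheory ENNReal

noncomputable section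

theorem Function.Involutive.prodMap_add_antisymm {α A : Type*} [AddGroup A] {f : α → α}
    (hf : Function.Involutive f) (s : α → α → A) (hs : ∀ z, s z (f z) = -s (f z) z) :
    Function.Involutive fun p : α × A => (f p.1, p.2 + s p.1 (f p.1)) := by
  rintro ⟨z, c⟩
  simp only [hf z, hs z, neg_add_cancel_right]

theorem stmt_18_general {d : ℕ} (Φ : Equiv.Perm (Phase d))
    (sharp : Phase d → Phase d → ℤ)
    (hanti : ∀ (z : Phase d) (i : ℤ),
      sharp z (Smap d ((Φ ^ i) z)) = - sharp (Smap d ((Φ ^ i) z)) z)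
    (hSinv : ∀ (z : Phase d) (i : ℤ), Smap d ((Φ ^ i) (Smap d ((Φ ^ i) z))) = z)
    (G : Phase d × ℤ × ℤ → Phase d × ℤ × ℤ)
    (hG : ∀ (z : Phase d) (c i : ℤ),
      G (z, c, i) = (Smap d ((Φ ^ i) z), c + sharp z (Smap d ((Φ ^ i) z)), i)) :
    ∀ q, G (G q) = q := by
  rintro ⟨z, c, i⟩
  have hlift := Function.Involutive.prodMap_add_antisymm (f := fun z => Smap d ((Φ ^ i) z))
    (hSinv · i) sharp (hanti · i) (z, c)
  rw [hG, hG]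
  exact congrArg (fun p => (p.1, p.2, i)) hlift

/-- For AAPS, the map
`G(θ, ρ, c, i) = (S ∘ Φ_h^i(θ,ρ), c + S_#((θ,ρ), S ∘ Φ_h^i(θ,ρ)), i)` is an
involution, given the antisymmetry of the segment index function `S_#` on accessible
pairs and that `S ∘ Φ_h^i` is an involution in the phase-space component. -/
theorem stmt_18 {d : ℕ} (Φ : Equiv.Perm (Phase d))
    (hΦS : ∀ z, Smap d (Φ (Smap d z)) = Φ⁻¹ z)
    (sharp : Phase d → Phase d → ℤ)
    (hanti : ∀ (z : Phase d) (i : ℤ),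
      sharp z (Smap d ((Φ ^ i) z)) = - sharp (Smap d ((Φ ^ i) z)) z)
    (hSinv : ∀ (z : Phase d) (i : ℤ), Smap d ((Φ ^ i) (Smap d ((Φ ^ i) z))) = z)
    (G : Phase d × ℤ × ℤ → Phase d × ℤ × ℤ)
    (hG : ∀ (z : Phase d) (c i : ℤ),
      G (z, c, i) = (Smap d ((Φ ^ i) z), c + sharp z (Smap d ((Φ ^ i) z)), i)) :
    ∀ q, G (G q) = q :=
  stmt_18_general Φ sharp hanti hSinv G hG
end
end
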